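/- Let X ∈ ℝ^{d×n}, and for i = 1,…,L let σᵢ : ℝ^{dᵢ×n} → ℝ^{dᵢ×n} be ρᵢ-Lipschitz with respect to the Frobenius norm with σᵢ(0)=0, and let aᵢ, sᵢ > 0, with d₀ = d. Let {1,…,L} be partitioned into a set S_A of fully connected layers and a set S_W of convolutional layers. For i ∈ S_A the layer matrix is Cᵢ = Aᵢ ∈ ℝ^{dᵢ×d_{i−1}}; for i ∈ S_W the layer matrix is Cᵢ = γᵢ(Wᵢ) ∈ ℝ^{dᵢ×d_{i−1}}, the fully connected matrix built from a convolutional weight Wᵢ ∈ ℝ^{cᵢ×rᵢ} via mᵢ = dᵢ/cᵢ fixed injective index maps. Define H = { σ_L(C_L σ_{L−1}(C_{L−1} ⋯ σ₁(C₁ X) ⋯)) : ‖Aᵢ‖_F ≤ aᵢ for i ∈ S_A, ‖Wᵢ‖_F ≤ aᵢ for i ∈ S_W, and ‖Cᵢ‖_σ ≤ sᵢ for all i } ⊆ ℝ^{d_L×n}, and let R_C = (2∏_{i=1}^{L} ρᵢ sᵢ)·(Σ_{i∈S_A} dᵢ² d_{i−1}² aᵢ / sᵢ + Σ_{i∈S_W}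 cᵢ² rᵢ² aᵢ √(dᵢ/cᵢ) / sᵢ)·L². Then for every ε > 0 there exists a finite set U of matrices in ℝ^{d_L×n} with ln|U| ≤ (‖X‖_F · R_C / ε)^{1/2} such that every element of H is within Frobenius distance ε of some element of U. -/

import Mathlib

noncomputable def frobNorm {α β : Type*} [Fintype α] [Fintype β] (M : Matrix α β ℝ) : ℝ :=
  Real.sqrt (∑ i, ∑ j, (M i j) ^ 2)

noncomputable def specNorm {α β : Type*} [Fintype α] [Fintype β] [DecidableEq β]
    (M : Matrix α β ℝ) : ℝ :=
  ‖LinearMap.toContinuousLinearMap (Matrix.toEuclideanLin M)‖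

/-- The fully connected matrix `γ(W)` built from a convolutional weight `W ∈ ℝ^{c×r}` via
`m` index maps `S k : Fin r → Fin d`. -/
noncomputable def gamma {c r d m : ℕ} (S : Fin m → Fin r → Fin d)
    (W : Matrix (Fin c) (Fin r) ℝ) : Matrix (Fin c × Fin m) (Fin d) ℝ :=
  fun ik j => ∑ p, if S ik.2 p = j then W ik.1 p else 0

noncomputable def netOutput {n : ℕ} (d : ℕ → ℕ)
    (C : ∀ i : ℕ, Matrix (Fin (d (i+1))) (Fin (d i)) ℝ)
    (σ : ∀ i : ℕ, Matrix (Fin (d (i+1))) (Fin n) ℝ → Matrix (Fin (d (i+1))) (Fin n) ℝ)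
    (X : Matrix (Fin (d 0)) (Fin n) ℝ) : (ℓ : ℕ) → Matrix (Fin (d ℓ)) (Fin n) ℝ
  | 0 => X
  | (ℓ+1) => σ ℓ (C ℓ * netOutput d C σ X ℓ)

/-!
An admissible matrix of layer `i` lies in the image of a Frobenius ball of radius `aᵢ` in dimension
`Dᵢ` under a `κᵢ`-Lipschitz map: the identity for a fully connected layer (`Dᵢ = dᵢ d_{i-1}`), and
`W ↦ γᵢ(W)`, which multiplies Frobenius distances by `κᵢ = √(dᵢ / cᵢ)`, for a convolutional one
(`Dᵢ = cᵢ rᵢ`). Comparing volumes of the disjoint balls around a maximal `e`-separated subset gives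
an `e`-net of such a set of size `(1 + 2 κᵢ aᵢ / e) ^ Dᵢ`.

Covering each layer at scale `η sᵢ` and composing the nets covers the network outputs: replacing the
`i`-th layer by a net point moves the output by at most `η ∏ⱼ ρⱼ sⱼ ‖X‖_F`, because the input of
layer `i` has norm at most `∏_{j<i} ρⱼ sⱼ ‖X‖_F` and every later layer is `ρⱼ sⱼ`-Lipschitz. With
`η = ε / (L ∏ ρⱼ sⱼ ‖X‖_F)` the total error is `ε`, and `log (1 + x) ≤ √x` followed by
Cauchy–Schwarz over the `L` layers turns `∑ Dᵢ log (1 + 2 κᵢ aᵢ / (η sᵢ))` into the stated bound.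
-/

open Metric MeasureTheory Module Set
open scoped NNReal ENNReal Matrix

theorem Real.log_one_add_le_sqrt {x : ℝ} (hx : 0 ≤ x) : Real.log (1 + x) ≤ √x := by
  have ht := Real.sqrt_nonneg x
  have hexp : 1 + √x ^ 2 ≤ Real.exp √x := by
    have h := Real.sum_le_exp_of_nonneg ht 4
    simp only [Finset.sum_range_succ, Finset.sum_range_zero, Nat.factorial] at h
    norm_num at h
    -- with `t = √x`: `t - t ^ 2 / 2 + t ^ 3 / 6 = t * ((t - 3 / 2) ^ 2 + 15 / 4) / 6 ≥ 0`
    nlinarith [mul_nonneg ht (sq_nonneg (√x - 3 / 2))]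
  rwa [Real.sq_sqrt hx, ← Real.log_le_iff_le_exp (by positivity)] at hexp

open Real Finset in
theorem log_le_sqrt_of_le_prod_pow {L N : ℕ} {D : ℕ → ℕ} {x : ℕ → ℝ} (hx : ∀ j < L, 0 ≤ x j)
    (hN : (N : ℝ) ≤ ∏ j ∈ range L, (1 + x j) ^ D j) :
    log N ≤ √(L * ∑ j ∈ range L, (D j : ℝ) ^ 2 * x j) := by
  have hfac : ∀ j ∈ range L, 1 ≤ (1 + x j) ^ D j := fun j hj =>
    one_le_pow₀ (le_add_of_nonneg_right (hx j (mem_range.1 hj)))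
  have hlog_prod : log (∏ j ∈ range L, (1 + x j) ^ D j) = ∑ j ∈ range L, D j * log (1 + x j) := by
    rw [log_prod fun j hj => (zero_lt_one.trans_le (hfac j hj)).ne']
    simp only [log_pow]
  calc log N ≤ log (∏ j ∈ range L, (1 + x j) ^ D j) := by
        rcases N.eq_zero_or_pos with rfl | hN0
        · simpa using log_nonneg (one_le_prod hfac)
        · exact log_le_log (by exact_mod_cast hN0) hN
    _ = ∑ j ∈ range L, D j * log (1 + x j) := hlog_prod
    _ ≤ ∑ j ∈ range L, D j * √(x j) := by
      gcongr with j hj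
      exact log_one_add_le_sqrt (hx j (mem_range.1 hj))
    _ ≤ √(L * ∑ j ∈ range L, (D j : ℝ) ^ 2 * x j) := by
      refine le_sqrt_of_sq_le ((sq_sum_le_card_mul_sum_sq).trans_eq ?_)
      rw [card_range]
      congr 1
      refine sum_congr rfl fun j hj => ?_
      rw [mul_pow, sq_sqrt (hx j (mem_range.1 hj))]

section Packing

variable {E : Type*} [NormedAddCommGroup E] [NormedSpace ℝ E] [FiniteDimensional ℝ E]

theorem Finset.card_le_of_isSeparated_of_subset_closedBall {C : Finset E} {a : ℝ} {ε : ℝ≥0}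
    (ha : 0 ≤ a) (hε : 0 < ε) (hC : ↑C ⊆ closedBall (0 : E) a) (hsep : IsSeparated ε (C : Set E)) :
    (C.card : ℝ) ≤ (1 + 2 * a / ε) ^ finrank ℝ E := by
  borelize E
  set μ : Measure E := Measure.addHaar
  have hε' : (0 : ℝ) < ε := hε
  have hdisj : (C : Set E).PairwiseDisjoint fun p => ball p (ε / 2) := by
    intro p hp q hq hpq
    refine ball_disjoint_ball ?_
    have h := hsep hp hq hpq
    simp only [edist_nndist, ENNReal.coe_lt_coe] at h
    have : (ε : ℝ) < dist p q := by rw [← coe_nndist]; exact_mod_cast h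
    linarith
  have hsub : (⋃ p ∈ C, ball p (ε / 2)) ⊆ ball (0 : E) (a + ε / 2) := by
    simp only [iUnion_subset_iff]
    intro p hp
    exact ball_subset_ball' (by linarith [mem_closedBall.1 (hC hp)])
  have hvol : (C.card : ℝ≥0∞) * μ (ball 0 (ε / 2)) ≤ μ (ball 0 (a + ε / 2)) := by
    calc (C.card : ℝ≥0∞) * μ (ball 0 (ε / 2)) = ∑ p ∈ C, μ (ball p (ε / 2)) := by
          simp [Measure.addHaar_ball_center]
      _ = μ (⋃ p ∈ C, ball p (ε / 2)) :=
          (measure_biUnion_finset hdisj fun p _ => measurableSet_ball).symm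
      _ ≤ μ (ball 0 (a + ε / 2)) := measure_mono hsub
  rw [Measure.addHaar_ball_of_pos μ 0 (half_pos hε'),
    Measure.addHaar_ball_of_pos μ 0 (by positivity : 0 < a + ε / 2),
    ← mul_assoc,
    ENNReal.mul_le_mul_iff_left (measure_ball_pos μ _ one_pos).ne' measure_ball_lt_top.ne,
    ← ENNReal.ofReal_natCast, ← ENNReal.ofReal_mul (by positivity),
    ENNReal.ofReal_le_ofReal_iff (by positivity)] at hvol
  rw [show 1 + 2 * a / ε = (a + ε / 2) / (ε / 2) by field_simp; ring, div_pow,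
    le_div_iff₀ (by positivity)]
  exact hvol

theorem packingNumber_le_of_subset_closedBall {K : Set E} {a : ℝ} {ε : ℝ≥0} (ha : 0 ≤ a)
    (hε : 0 < ε) (hK : K ⊆ closedBall (0 : E) a) :
    packingNumber ε K ≤ ⌊(1 + 2 * a / ε) ^ finrank ℝ E⌋₊ := by
  refine iSup₂_le fun C hCK => iSup_le fun hsep => ?_
  by_contra! hlt
  set k := ⌊(1 + 2 * a / ε) ^ finrank ℝ E⌋₊
  obtain ⟨F, hFC, hFcard⟩ := exists_subset_encard_eq (k := ((k + 1 : ℕ) : ℕ∞))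
    (by push_cast; exact Order.add_one_le_of_lt hlt)
  have hF : F.Finite := finite_of_encard_eq_coe hFcard
  have hcard : hF.toFinset.card = k + 1 := by
    rw [← Nat.cast_inj (R := ℕ∞), ← hF.encard_eq_coe_toFinset_card, hFcard]
  have hbound := Finset.card_le_of_isSeparated_of_subset_closedBall (C := hF.toFinset) ha hε
    (by simpa using hFC.trans (hCK.trans hK)) (by simpa using hsep.subset hFC)
  rw [hcard, Nat.cast_add_one] at hbound
  exact (Nat.lt_floor_add_one _).not_ge hbound

theorem exists_finset_subset_isCover_card_le {s : Set E} {a : ℝ} {ε : ℝ≥0} (ha : 0 ≤ a)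
    (hε : 0 < ε) (hs : s ⊆ closedBall (0 : E) a) :
    ∃ N : Finset E, ↑N ⊆ s ∧ IsCover ε s ↑N ∧ (N.card : ℝ) ≤ (1 + 2 * a / ε) ^ finrank ℝ E := by
  have hpack := packingNumber_le_of_subset_closedBall ha hε hs
  have hfin : packingNumber ε s ≠ ⊤ := ne_top_of_le_ne_top (ENat.natCast_ne_top _) hpack
  have hS := (encard_maximalSeparatedSet hfin).trans_le hpack
  have hSfin := finite_of_encard_le_coe hS
  refine ⟨hSfin.toFinset, by simpa using maximalSeparatedSet_subset,
    by simpa using isCover_maximalSeparatedSet hfin, ?_⟩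
  rw [hSfin.encard_eq_coe_toFinset_card, Nat.cast_le] at hS
  exact (Nat.cast_le.2 hS).trans (Nat.floor_le (by positivity))

theorem LipschitzWith.exists_finset_subset_image_isCover_card_le {F : Type*} [MetricSpace F]
    {f : E → F} {K : ℝ≥0} (hf : LipschitzWith K f) {s : Set E} {a : ℝ} {ε : ℝ≥0} (ha : 0 ≤ a)
    (hε : 0 < ε) (hs : s ⊆ closedBall (0 : E) a) :
    ∃ N : Finset F, ↑N ⊆ f '' s ∧ IsCover ε (f '' s) ↑N ∧
      (N.card : ℝ) ≤ (1 + 2 * K * a / ε) ^ finrank ℝ E := by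
  classical
  rcases eq_or_ne K 0 with rfl | hK
  · have hsub : (f '' s).Subsingleton := by
      rintro _ ⟨x, -, rfl⟩ _ ⟨y, -, rfl⟩
      simpa using hf.dist_le_mul x y
    refine ⟨hsub.finite.toFinset, by simp, by simp, ?_⟩
    simpa using Finset.card_le_one.2 fun x hx y hy => hsub (by simpa using hx) (by simpa using hy)
  · obtain ⟨N, hNs, hcov, hcard⟩ := exists_finset_subset_isCover_card_le (ε := ε / K) ha
      (by positivity) hs
    refine ⟨N.image f, by simpa using image_mono hNs, ?_, ?_⟩
    · simpa [mul_div_cancel₀ _ hK] using hcov.image_lipschitz hf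
    · calc ((N.image f).card : ℝ) ≤ N.card := by exact_mod_cast Finset.card_image_le
        _ ≤ (1 + 2 * K * a / ε) ^ finrank ℝ E := hcard.trans_eq (by rw [NNReal.coe_div]; field_simp)

end Packing

section Frobenius

attribute [local instance] Matrix.frobeniusNormedAddCommGroup Matrix.frobeniusNormedSpace

variable {ι κ γ : Type*} [Fintype ι] [Fintype κ] [Fintype γ]

theorem frobNorm_nonneg (M : Matrix ι κ ℝ) : 0 ≤ frobNorm M := Real.sqrt_nonneg _

theorem specNorm_nonneg [DecidableEq κ] (M : Matrix ι κ ℝ) : 0 ≤ specNorm M := norm_nonneg _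

theorem frobNorm_eq_norm (M : Matrix ι κ ℝ) : frobNorm M = ‖M‖ := by
  simp [frobNorm, Matrix.frobenius_norm_def, Real.sqrt_eq_rpow]

theorem frobNorm_sq_eq_sum_norm_sq_col (Y : Matrix κ γ ℝ) :
    frobNorm Y ^ 2 = ∑ j, ‖WithLp.toLp 2 (Yᵀ j)‖ ^ 2 := by
  rw [frobNorm, Real.sq_sqrt (by positivity), Finset.sum_comm]
  simp [EuclideanSpace.norm_sq_eq]

theorem frobNorm_mul_le_specNorm_mul [DecidableEq κ] (M : Matrix ι κ ℝ) (Y : Matrix κ γ ℝ) :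
    frobNorm (M * Y) ≤ specNorm M * frobNorm Y := by
  have hcol (j : γ) : ‖WithLp.toLp 2 ((M * Y)ᵀ j)‖ ≤ specNorm M * ‖WithLp.toLp 2 (Yᵀ j)‖ := by
    have := (LinearMap.toContinuousLinearMap (Matrix.toEuclideanLin M)).le_opNorm
      (WithLp.toLp 2 (Yᵀ j))
    have hMY : (M * Y)ᵀ j = M *ᵥ Yᵀ j := by
      ext i
      simp [Matrix.mul_apply, Matrix.mulVec, dotProduct]
    simpa [specNorm, hMY] using this
  refine le_of_pow_le_pow_left₀ two_ne_zero (mul_nonneg (specNorm_nonneg M) (frobNorm_nonneg Y)) ?_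
  rw [mul_pow, frobNorm_sq_eq_sum_norm_sq_col, frobNorm_sq_eq_sum_norm_sq_col, Finset.mul_sum]
  gcongr with j
  rw [← mul_pow]
  exact pow_le_pow_left₀ (norm_nonneg _) (hcol j) 2

theorem exists_finset_matrix_net {ι' κ' : Type*} [Fintype ι'] [Fintype κ'] [DecidableEq κ']
    {f : Matrix ι κ ℝ → Matrix ι' κ' ℝ} {K : ℝ} (hK : 0 ≤ K)
    (hf : ∀ A B, frobNorm (f A - f B) ≤ K * frobNorm (A - B)) {a η : ℝ} (ha : 0 ≤ a)
    (hη : 0 < η) (s : ℝ) :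
    ∃ N : Finset (Matrix ι' κ' ℝ),
      (N.card : ℝ) ≤ (1 + 2 * (K * a) / η) ^ (Fintype.card ι * Fintype.card κ) ∧
      (∀ P ∈ N, specNorm P ≤ s) ∧
      ∀ A, frobNorm A ≤ a → specNorm (f A) ≤ s → ∃ P ∈ N, frobNorm (f A - P) ≤ η := by
  have hlip : LipschitzWith K.toNNReal f := .of_dist_le_mul fun A B => by
    simpa [dist_eq_norm, ← frobNorm_eq_norm, Real.coe_toNNReal _ hK] using hf A B
  obtain ⟨N, hNsub, hNcov, hNcard⟩ := hlip.exists_finset_subset_image_isCover_card_le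
    (s := {A | ‖A‖ ≤ a ∧ specNorm (f A) ≤ s}) (ε := η.toNNReal) ha (by simpa using hη)
    fun A hA => mem_closedBall_zero_iff.2 hA.1
  refine ⟨N, ?_, fun P hP => ?_, fun A hA hAs => ?_⟩
  · simpa [Real.coe_toNNReal _ hK, Real.coe_toNNReal _ hη.le, Module.finrank_matrix, mul_assoc]
      using hNcard
  · obtain ⟨A, hA, rfl⟩ := hNsub hP
    exact hA.2
  · obtain ⟨P, hP, hdist⟩ := hNcov (mem_image_of_mem f ⟨by rwa [← frobNorm_eq_norm], hAs⟩)
    refine ⟨P, hP, ?_⟩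
    rw [frobNorm_eq_norm, ← coe_nnnorm, ← Real.coe_toNNReal η hη.le]
    simp only [mem_ofPred_eq, edist_nndist, nndist_eq_nnnorm, ENNReal.coe_le_coe] at hdist
    exact_mod_cast hdist

end Frobenius

theorem Function.Injective.sum_sq_sum_ite_eq {ι κ : Type*} [Fintype ι] [Fintype κ]
    [DecidableEq κ] {S : ι → κ} (hS : Function.Injective S) (w : ι → ℝ) :
    ∑ j, (∑ p, if S p = j then w p else 0) ^ 2 = ∑ p, w p ^ 2 := by
  have hcollapse (j : κ) :
      (∑ p, if S p = j then w p else 0) ^ 2 = ∑ p, if S p = j then w p ^ 2 else 0 := by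
    by_cases hj : ∃ p, S p = j
    · obtain ⟨p, rfl⟩ := hj
      rw [Finset.sum_eq_single p, Finset.sum_eq_single p] <;> simp +contextual [hS.eq_iff]
    · simp only [not_exists] at hj
      simp [hj]
  simp_rw [hcollapse]
  rw [Finset.sum_comm]
  simp

theorem gamma_sub {c r d m : ℕ} (S : Fin m → Fin r → Fin d) (W W' : Matrix (Fin c) (Fin r) ℝ) :
    gamma S W - gamma S W' = gamma S (W - W') := by
  ext ik j
  simp only [gamma, Matrix.sub_apply, ← Finset.sum_sub_distrib]
  congr! 1 with p
  split_ifs <;> simp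

theorem frobNorm_gamma {c r d m : ℕ} {S : Fin m → Fin r → Fin d}
    (hS : ∀ k, Function.Injective (S k)) (W : Matrix (Fin c) (Fin r) ℝ) :
    frobNorm (gamma S W) = √m * frobNorm W := by
  rw [frobNorm, frobNorm, ← Real.sqrt_mul (Nat.cast_nonneg _), Fintype.sum_prod_type]
  simp [gamma, (hS _).sum_sq_sum_ite_eq, Finset.mul_sum]

theorem frobNorm_reindex {ι κ ι' κ' : Type*} [Fintype ι] [Fintype κ] [Fintype ι'] [Fintype κ']
    (e₁ : ι ≃ ι') (e₂ : κ ≃ κ') (M : Matrix ι κ ℝ) :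
    frobNorm (Matrix.reindex e₁ e₂ M) = frobNorm M := by
  simp only [frobNorm, Matrix.reindex_apply, Matrix.submatrix_apply]
  congr 1
  exact Fintype.sum_equiv e₁.symm _ _ fun i => Fintype.sum_equiv e₂.symm _ _ fun j => rfl

theorem frobNorm_reindex_gamma_sub {c r d d' m : ℕ} {S : Fin m → Fin r → Fin d}
    (hS : ∀ k, Function.Injective (S k)) (e : Fin c × Fin m ≃ Fin d')
    (W W' : Matrix (Fin c) (Fin r) ℝ) :
    frobNorm (Matrix.reindex e (Equiv.refl _) (gamma S W) -
      Matrix.reindex e (Equiv.refl _) (gamma S W')) = √((d' : ℝ) / c) * frobNorm (W - W') := by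
  have hsub : Matrix.reindex e (Equiv.refl _) (gamma S W) -
      Matrix.reindex e (Equiv.refl _) (gamma S W') =
      Matrix.reindex e (Equiv.refl _) (gamma S (W - W')) := by
    rw [← gamma_sub]
    rfl
  rw [hsub, frobNorm_reindex, frobNorm_gamma hS]
  rcases Nat.eq_zero_or_pos c with rfl | hc
  · simp [frobNorm]
  · have hd' : d' = c * m := by simpa using (Fintype.card_congr e).symm
    rw [hd', Nat.cast_mul, mul_div_cancel_left₀ _ (by positivity)]

section Network

attribute [local instance] Matrix.frobeniusNormedAddCommGroup

theorem frobNorm_comp_mul_sub_comp_mul_le {α β γ : Type*} [Fintype α] [Fintype β] [Fintype γ]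
    [DecidableEq β] {f : Matrix α γ ℝ → Matrix α γ ℝ} {ρ : ℝ} (hρ : 0 ≤ ρ)
    (hf : ∀ A B, frobNorm (f A - f B) ≤ ρ * frobNorm (A - B)) (C P : Matrix α β ℝ)
    (Y Y' : Matrix β γ ℝ) :
    frobNorm (f (C * Y) - f (P * Y')) ≤
      ρ * (specNorm P * frobNorm (Y - Y') + frobNorm (C - P) * frobNorm Y) := by
  have hsplit : C * Y - P * Y' = P * (Y - Y') + (C - P) * Y := by
    rw [Matrix.mul_sub, Matrix.sub_mul]
    abel
  refine (hf _ _).trans (mul_le_mul_of_nonneg_left ?_ hρ)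
  rw [hsplit]
  refine (frobNorm_eq_norm _).trans_le ((norm_add_le _ _).trans (add_le_add ?_ ?_))
  · exact (frobNorm_eq_norm _).symm.trans_le (frobNorm_mul_le_specNorm_mul _ _)
  · simpa only [frobNorm_eq_norm] using Matrix.frobenius_norm_mul (C - P) Y

variable {n L : ℕ} {d : ℕ → ℕ}
  {σ : ∀ i : ℕ, Matrix (Fin (d (i+1))) (Fin n) ℝ → Matrix (Fin (d (i+1))) (Fin n) ℝ}
  {X : Matrix (Fin (d 0)) (Fin n) ℝ} {ρ s : ℕ → ℝ}

theorem frobNorm_netOutput_le (hρ : ∀ i < L, 0 ≤ ρ i)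
    (hσ : ∀ i < L, ∀ A B, frobNorm (σ i A - σ i B) ≤ ρ i * frobNorm (A - B))
    (hσ0 : ∀ i < L, σ i 0 = 0) {C : ∀ i : ℕ, Matrix (Fin (d (i+1))) (Fin (d i)) ℝ}
    (hC : ∀ i < L, specNorm (C i) ≤ s i) :
    frobNorm (netOutput d C σ X L) ≤ (∏ i ∈ Finset.range L, ρ i * s i) * frobNorm X := by
  induction L with
  | zero => simp [netOutput]
  | succ L ih =>
    have hL := L.lt_succ_self
    specialize ih (fun i hi => hρ i (hi.trans hL)) (fun i hi => hσ i (hi.trans hL))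
      (fun i hi => hσ0 i (hi.trans hL)) (fun i hi => hC i (hi.trans hL))
    calc frobNorm (netOutput d C σ X (L + 1))
        = frobNorm (σ L (C L * netOutput d C σ X L) - σ L 0) := by rw [hσ0 L hL, sub_zero]; rfl
      _ ≤ ρ L * frobNorm (C L * netOutput d C σ X L) := by
        simpa using hσ L hL (C L * netOutput d C σ X L) 0
      _ ≤ ρ L * (s L * ((∏ i ∈ Finset.range L, ρ i * s i) * frobNorm X)) := by
        refine mul_le_mul_of_nonneg_left ((frobNorm_mul_le_specNorm_mul _ _).trans ?_) (hρ L hL)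
        exact mul_le_mul (hC L hL) ih (frobNorm_nonneg _) ((specNorm_nonneg _).trans (hC L hL))
      _ = (∏ i ∈ Finset.range (L + 1), ρ i * s i) * frobNorm X := by
        rw [Finset.prod_range_succ]
        ring

theorem exists_finset_netOutput_cover (hρ : ∀ i < L, 0 ≤ ρ i)
    (hσ : ∀ i < L, ∀ A B, frobNorm (σ i A - σ i B) ≤ ρ i * frobNorm (A - B))
    (hσ0 : ∀ i < L, σ i 0 = 0) (K : ∀ i : ℕ, Set (Matrix (Fin (d (i+1))) (Fin (d i)) ℝ))
    (hK : ∀ i < L, ∀ A ∈ K i, specNorm A ≤ s i) {M : ℕ → ℝ} {η : ℝ}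
    (hnet : ∀ i < L, ∃ N : Finset (Matrix (Fin (d (i+1))) (Fin (d i)) ℝ),
      (N.card : ℝ) ≤ M i ∧ (∀ P ∈ N, specNorm P ≤ s i) ∧
      ∀ A ∈ K i, ∃ P ∈ N, frobNorm (A - P) ≤ η * s i) :
    ∃ U : Finset (Matrix (Fin (d L)) (Fin n) ℝ), (U.card : ℝ) ≤ ∏ i ∈ Finset.range L, M i ∧
      ∀ C : ∀ i : ℕ, Matrix (Fin (d (i+1))) (Fin (d i)) ℝ, (∀ i < L, C i ∈ K i) →
        ∃ u ∈ U, frobNorm (netOutput d C σ X L - u) ≤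
          L * η * ((∏ i ∈ Finset.range L, ρ i * s i) * frobNorm X) := by
  classical
  induction L with
  | zero => exact ⟨{X}, by simp, fun C _ => ⟨X, by simp, by simp [netOutput, frobNorm]⟩⟩
  | succ L ih =>
    have hL := L.lt_succ_self
    obtain ⟨U, hUcard, hUcov⟩ := ih (fun i hi => hρ i (hi.trans hL))
      (fun i hi => hσ i (hi.trans hL)) (fun i hi => hσ0 i (hi.trans hL))
      (fun i hi => hK i (hi.trans hL)) (fun i hi => hnet i (hi.trans hL))
    obtain ⟨N, hNcard, hNs, hNcov⟩ := hnet L hL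
    refine ⟨(U ×ˢ N).image fun uP => σ L (uP.2 * uP.1), ?_, fun C hC => ?_⟩
    · calc (((U ×ˢ N).image fun uP => σ L (uP.2 * uP.1)).card : ℝ)
          ≤ U.card * N.card := by
            exact_mod_cast Finset.card_image_le.trans_eq (Finset.card_product U N)
        _ ≤ (∏ i ∈ Finset.range L, M i) * M L :=
          mul_le_mul hUcard hNcard (Nat.cast_nonneg _) ((Nat.cast_nonneg _).trans hUcard)
        _ = ∏ i ∈ Finset.range (L + 1), M i := (Finset.prod_range_succ _ _).symm
    obtain ⟨u, hu, hu_err⟩ := hUcov C fun i hi => hC i (hi.trans hL)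
    obtain ⟨P, hP, hCP⟩ := hNcov (C L) (hC L hL)
    refine ⟨σ L (P * u), Finset.mem_image.2 ⟨(u, P), Finset.mem_product.2 ⟨hu, hP⟩, rfl⟩, ?_⟩
    have hout := frobNorm_netOutput_le (X := X) (fun i hi => hρ i (hi.trans hL))
      (fun i hi => hσ i (hi.trans hL)) (fun i hi => hσ0 i (hi.trans hL))
      (fun i hi => hK i (hi.trans hL) _ (hC i (hi.trans hL)))
    have hs : 0 ≤ s L := (specNorm_nonneg P).trans (hNs P hP)
    set T := (∏ i ∈ Finset.range L, ρ i * s i) * frobNorm X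
    calc frobNorm (netOutput d C σ X (L + 1) - σ L (P * u))
        ≤ ρ L * (specNorm P * frobNorm (netOutput d C σ X L - u) +
            frobNorm (C L - P) * frobNorm (netOutput d C σ X L)) :=
          frobNorm_comp_mul_sub_comp_mul_le (hρ L hL) (hσ L hL) _ _ _ _
      _ ≤ ρ L * (s L * (L * η * T) + η * s L * T) := by
          refine mul_le_mul_of_nonneg_left (add_le_add ?_ ?_) (hρ L hL)
          · exact mul_le_mul (hNs P hP) hu_err (frobNorm_nonneg _) hs
          · exact mul_le_mul hCP hout (frobNorm_nonneg _) ((frobNorm_nonneg _).trans hCP)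
      _ = (L + 1 : ℕ) * η * ((∏ i ∈ Finset.range (L + 1), ρ i * s i) * frobNorm X) := by
          rw [Finset.prod_range_succ]
          push_cast
          ring

theorem exists_netOutput_cover_log_card_le (hρ : ∀ i < L, 0 ≤ ρ i) (hs : ∀ i < L, 0 < s i)
    (hσ : ∀ i < L, ∀ A B, frobNorm (σ i A - σ i B) ≤ ρ i * frobNorm (A - B))
    (hσ0 : ∀ i < L, σ i 0 = 0) (K : ∀ i : ℕ, Set (Matrix (Fin (d (i+1))) (Fin (d i)) ℝ))
    (hK : ∀ i < L, ∀ A ∈ K i, specNorm A ≤ s i) {R : ℕ → ℝ} (hR : ∀ i < L, 0 ≤ R i) {D : ℕ → ℕ}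
    (hnet : ∀ i < L, ∀ e > 0, ∃ N : Finset (Matrix (Fin (d (i+1))) (Fin (d i)) ℝ),
      (N.card : ℝ) ≤ (1 + 2 * R i / e) ^ D i ∧ (∀ P ∈ N, specNorm P ≤ s i) ∧
      ∀ A ∈ K i, ∃ P ∈ N, frobNorm (A - P) ≤ e) {ε : ℝ} (hε : 0 < ε) :
    ∃ U : Finset (Matrix (Fin (d L)) (Fin n) ℝ),
      Real.log U.card ≤ √(frobNorm X * ((2 * ∏ i ∈ Finset.range L, ρ i * s i) *
        (∑ i ∈ Finset.range L, (D i : ℝ) ^ 2 * R i / s i) * L ^ 2) / ε) ∧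
      ∀ C : ∀ i : ℕ, Matrix (Fin (d (i+1))) (Fin (d i)) ℝ, (∀ i < L, C i ∈ K i) →
        ∃ u ∈ U, frobNorm (netOutput d C σ X L - u) ≤ ε := by
  set T := (∏ i ∈ Finset.range L, ρ i * s i) * frobNorm X
  have hT : 0 ≤ T := mul_nonneg (Finset.prod_nonneg fun i hi =>
    mul_nonneg (hρ i (Finset.mem_range.1 hi)) (hs i (Finset.mem_range.1 hi)).le) (frobNorm_nonneg X)
  rcases hT.eq_or_lt with hT0 | hTpos
  · refine ⟨{0}, by simp [Real.sqrt_nonneg], fun C hC => ⟨0, by simp, ?_⟩⟩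
    rw [sub_zero]
    exact (frobNorm_netOutput_le hρ hσ hσ0 fun i hi => hK i hi _ (hC i hi)).trans
      (hT0.symm.le.trans hε.le)
  -- at scale `η sᵢ` the `L` propagated layer errors add up to exactly `ε`
  set η := ε / (L * T)
  have hnet' : ∀ i < L, ∃ N : Finset (Matrix (Fin (d (i+1))) (Fin (d i)) ℝ),
      (N.card : ℝ) ≤ (1 + 2 * R i / (η * s i)) ^ D i ∧ (∀ P ∈ N, specNorm P ≤ s i) ∧
      ∀ A ∈ K i, ∃ P ∈ N, frobNorm (A - P) ≤ η * s i := fun i hi =>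
    hnet i hi _ (mul_pos (div_pos hε (mul_pos (Nat.cast_pos.2 (Nat.zero_lt_of_lt hi)) hTpos))
      (hs i hi))
  obtain ⟨U, hUcard, hUcov⟩ := exists_finset_netOutput_cover (X := X) hρ hσ hσ0 K hK hnet'
  have hx : ∀ i < L, 0 ≤ 2 * R i / (η * s i) := fun i hi => by
    have := hR i hi
    have := hs i hi
    positivity
  refine ⟨U, (log_le_sqrt_of_le_prod_pow hx hUcard).trans_eq ?_, fun C hC => ?_⟩
  · congr 1
    rw [Finset.mul_sum, show ∀ S : ℝ, frobNorm X * ((2 * ∏ i ∈ Finset.range L, ρ i * s i) * S *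
        L ^ 2) / ε = 2 * L ^ 2 * T / ε * S from fun S => by ring, Finset.mul_sum]
    refine Finset.sum_congr rfl fun i _ => ?_
    simp only [η, div_eq_mul_inv, mul_inv, inv_inv]
    ring
  · obtain ⟨u, hu, herr⟩ := hUcov C hC
    refine ⟨u, hu, herr.trans ?_⟩
    rcases Nat.eq_zero_or_pos L with hL | hL
    · simp [hL, hε.le]
    · have hcancel := div_mul_cancel₀ ε (mul_ne_zero (by positivity : (L : ℝ) ≠ 0) hTpos.ne')
      exact le_of_eq (by linear_combination hcancel)

end Network

theorem sum_ite_mem_eq_add_of_union_eq {ι M : Type*} [DecidableEq ι] [AddCommMonoid M]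
    {A B S : Finset ι} (hS : A ∪ B = S) (hAB : Disjoint A B) (f g : ι → M) :
    ∑ i ∈ S, (if i ∈ A then f i else g i) = ∑ i ∈ A, f i + ∑ i ∈ B, g i := by
  rw [← hS, Finset.sum_union hAB]
  congr 1
  · exact Finset.sum_congr rfl fun i hi => if_pos hi
  · exact Finset.sum_congr rfl fun i hi => if_neg (Finset.disjoint_right.1 hAB hi)

section CNN

variable {SA SW : Finset ℕ} {d c r m : ℕ → ℕ} {s a : ℕ → ℝ}

def cnnLayerDim (SA : Finset ℕ) (d c r : ℕ → ℕ) (j : ℕ) : ℕ :=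
  if j ∈ SA then d (j+1) * d j else c j * r j

noncomputable def cnnLayerRadius (SA : Finset ℕ) (d c : ℕ → ℕ) (a : ℕ → ℝ) (j : ℕ) : ℝ :=
  if j ∈ SA then a j else √((d (j+1) : ℝ) / c j) * a j

def cnnLayerSet (SA SW : Finset ℕ) (hd : ∀ i ∈ SW, d (i+1) = c i * m i)
    (Smap : ∀ i : ℕ, Fin (m i) → Fin (r i) → Fin (d i)) (s a : ℕ → ℝ) (j : ℕ) :
    Set (Matrix (Fin (d (j+1))) (Fin (d j)) ℝ) :=
  {A | specNorm A ≤ s j ∧ (j ∈ SA → frobNorm A ≤ a j) ∧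
    ∀ hj : j ∈ SW, ∃ W : Matrix (Fin (c j)) (Fin (r j)) ℝ, frobNorm W ≤ a j ∧
      A = Matrix.reindex (finProdFinEquiv.trans (finCongr (hd j hj).symm))
        (Equiv.refl (Fin (d j))) (gamma (Smap j) W)}

theorem cnnLayerRadius_nonneg {j : ℕ} (ha : 0 ≤ a j) : 0 ≤ cnnLayerRadius SA d c a j := by
  unfold cnnLayerRadius
  split_ifs <;> positivity

theorem exists_finset_cnnLayerSet_net (hdisj : Disjoint SA SW) (hd : ∀ i ∈ SW, d (i+1) = c i * m i)
    {Smap : ∀ i : ℕ, Fin (m i) → Fin (r i) → Fin (d i)}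
    (hSmap : ∀ i ∈ SW, ∀ k, Function.Injective (Smap i k)) {j : ℕ} (hj : j ∈ SA ∪ SW)
    (ha : 0 ≤ a j) {e : ℝ} (he : 0 < e) :
    ∃ N : Finset (Matrix (Fin (d (j+1))) (Fin (d j)) ℝ),
      (N.card : ℝ) ≤ (1 + 2 * cnnLayerRadius SA d c a j / e) ^ cnnLayerDim SA d c r j ∧
      (∀ P ∈ N, specNorm P ≤ s j) ∧
      ∀ A ∈ cnnLayerSet SA SW hd Smap s a j, ∃ P ∈ N, frobNorm (A - P) ≤ e := by
  rcases Finset.mem_union.1 hj with hA | hW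
  · obtain ⟨N, hNcard, hNs, hNcov⟩ := exists_finset_matrix_net
      (f := (id : Matrix (Fin (d (j+1))) (Fin (d j)) ℝ → _)) zero_le_one
      (fun A B => (one_mul _).ge) ha he (s j)
    refine ⟨N, by simpa [cnnLayerRadius, cnnLayerDim, hA] using hNcard, hNs, fun A hA' => ?_⟩
    exact hNcov A (hA'.2.1 hA) hA'.1
  · have hA : j ∉ SA := Finset.disjoint_right.1 hdisj hW
    obtain ⟨N, hNcard, hNs, hNcov⟩ := exists_finset_matrix_net (Real.sqrt_nonneg _)
      (fun W W' => (frobNorm_reindex_gamma_sub (hSmap j hW) _ W W').le) ha he (s j)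
    refine ⟨N, by simpa [cnnLayerRadius, cnnLayerDim, hA] using hNcard, hNs, fun A hA' => ?_⟩
    obtain ⟨W, hWa, rfl⟩ := hA'.2.2 hW
    exact hNcov W hWa hA'.1

theorem sum_range_cnnLayer_eq_add {L : ℕ} (hpart : SA ∪ SW = Finset.range L)
    (hdisj : Disjoint SA SW) :
    ∑ j ∈ Finset.range L, (cnnLayerDim SA d c r j : ℝ) ^ 2 * cnnLayerRadius SA d c a j / s j =
      (∑ i ∈ SA, (d (i+1) : ℝ) ^ 2 * (d i : ℝ) ^ 2 * a i / s i) + (∑ i ∈ SW,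
        (c i : ℝ) ^ 2 * (r i : ℝ) ^ 2 * a i * √((d (i+1) : ℝ) / (c i : ℝ)) / s i) := by
  rw [← sum_ite_mem_eq_add_of_union_eq hpart hdisj]
  refine Finset.sum_congr rfl fun j _ => ?_
  unfold cnnLayerDim cnnLayerRadius
  split_ifs <;> push_cast <;> ring

end CNN

/-- covering number bound for general CNNs whose layers `{0,…,L−1}` are
partitioned into fully connected layers `SA` (with `‖Aᵢ‖_F ≤ aᵢ`) and convolutional layers
`SW` (with `Cᵢ = γᵢ(Wᵢ)`, `‖Wᵢ‖_F ≤ aᵢ`), all layers satisfying `‖Cᵢ‖_σ ≤ sᵢ`: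
for every ε > 0 there is a finite `U` with `ln |U| ≤ (‖X‖_F · R_C / ε)^(1/2)` that
ε-covers all network outputs, where
`R_C = (2∏ ρᵢ sᵢ)·(Σ_{i∈SA} dᵢ² d_{i−1}² aᵢ/sᵢ + Σ_{i∈SW} cᵢ² rᵢ² aᵢ √(dᵢ/cᵢ)/sᵢ)·L²`. -/
theorem covering_number_cnn (L n : ℕ) (d c r m : ℕ → ℕ)
    (SA SW : Finset ℕ) (hpart : SA ∪ SW = Finset.range L) (hdisj : Disjoint SA SW)
    (hd : ∀ i ∈ SW, d (i+1) = c i * m i)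
    (Smap : ∀ i : ℕ, Fin (m i) → Fin (r i) → Fin (d i))
    (hSmap : ∀ i ∈ SW, ∀ k, Function.Injective (Smap i k))
    (X : Matrix (Fin (d 0)) (Fin n) ℝ)
    (σ : ∀ i : ℕ, Matrix (Fin (d (i+1))) (Fin n) ℝ → Matrix (Fin (d (i+1))) (Fin n) ℝ)
    (ρ s a : ℕ → ℝ)
    (hρ : ∀ i < L, 0 ≤ ρ i) (hs : ∀ i < L, 0 < s i) (ha : ∀ i < L, 0 < a i)
    (hσ : ∀ i < L, ∀ A B : Matrix (Fin (d (i+1))) (Fin n) ℝ,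
      frobNorm (σ i A - σ i B) ≤ ρ i * frobNorm (A - B))
    (hσ0 : ∀ i < L, σ i 0 = 0) :
    ∀ ε > (0 : ℝ), ∃ U : Finset (Matrix (Fin (d L)) (Fin n) ℝ),
      Real.log U.card ≤ Real.sqrt (frobNorm X *
        ((2 * ∏ i ∈ Finset.range L, ρ i * s i) *
          ((∑ i ∈ SA, (d (i+1) : ℝ) ^ 2 * (d i : ℝ) ^ 2 * a i / s i) +
           (∑ i ∈ SW,
             (c i : ℝ) ^ 2 * (r i : ℝ) ^ 2 * a i * Real.sqrt ((d (i+1) : ℝ) / (c i : ℝ)) / s i)) *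
          (L : ℝ) ^ 2) / ε) ∧
      ∀ C : ∀ i : ℕ, Matrix (Fin (d (i+1))) (Fin (d i)) ℝ,
        (∀ i < L, specNorm (C i) ≤ s i) →
        (∀ i ∈ SA, frobNorm (C i) ≤ a i) →
        (∀ i (hi : i ∈ SW), ∃ W : Matrix (Fin (c i)) (Fin (r i)) ℝ, frobNorm W ≤ a i ∧
          C i = Matrix.reindex (finProdFinEquiv.trans (finCongr (hd i hi).symm))
            (Equiv.refl (Fin (d i))) (gamma (Smap i) W)) →
        ∃ u ∈ U, frobNorm (netOutput d C σ X L - u) ≤ ε := by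
  intro ε hε
  obtain ⟨U, hU, hcov⟩ := exists_netOutput_cover_log_card_le (X := X) hρ hs hσ hσ0
    (cnnLayerSet SA SW hd Smap s a) (fun j _ A hA => hA.1)
    (fun j hj => cnnLayerRadius_nonneg (ha j hj).le)
    (fun j hj e he => exists_finset_cnnLayerSet_net hdisj hd hSmap
      (hpart ▸ Finset.mem_range.2 hj) (ha j hj).le he) hε
  rw [sum_range_cnnLayer_eq_add hpart hdisj] at hU
  exact ⟨U, hU, fun C h1 h2 h3 => hcov C fun i hi => ⟨h1 i hi, h2 i, h3 i⟩⟩
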